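/- arXiv:2411.08220 — 7 statements merged into one kernel-verified Lean document; each statement's English description precedes it below -/
import Mathlib

section
/- For every α ∈ (0,2), the value sin(πα/2)·Γ((α+1)/2)²/Γ(α) is at most Γ((α+1)/2)²/Γ(α), and the latter quantity G(α) := Γ((α+1)/2)²/Γ(α) satisfies G(α) < 1 for all α ∈ (0,1) ∪ (1,2), with G(1) = 1. -/
/-!
`log Γ` is strictly convex on `(0, ∞)`: by `Γ(x + 1) = x Γ(x)` it is the sum of the convex
function `x ↦ log Γ(x + 1)` and the strictly convex `x ↦ -log x`. Strict midpoint convexity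
between `α` and `1` gives `Γ((α + 1)/2)² < Γ(α) Γ(1) = Γ(α)` for `α ≠ 1`, and the factor
`sin(πα/2) ≤ 1` only decreases the quotient.
-/

open Real Set

theorem strictConvexOn_log_Gamma : StrictConvexOn ℝ (Ioi 0) (log ∘ Gamma) := by
  have h_shift : ConvexOn ℝ (Ioi 0) fun x => log (Gamma (x + 1)) :=
    (convexOn_log_Gamma.translate_left 1).subset
      (fun x (hx : 0 < x) => show (0 : ℝ) < 1 + x by linarith) (convex_Ioi 0)
  refine (h_shift.add_strictConvexOn strictConcaveOn_log_Ioi.neg).congr fun x (hx : 0 < x) => ?_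
  simp only [Pi.add_apply, Pi.neg_apply, Function.comp_apply, Gamma_add_one hx.ne',
    log_mul hx.ne' (Gamma_pos_of_pos hx).ne']
  ring

theorem Gamma_midpoint_sq_lt_mul {x y : ℝ} (hx : 0 < x) (hy : 0 < y) (hxy : x ≠ y) :
    Gamma ((x + y) / 2) ^ 2 < Gamma x * Gamma y := by
  have hmid := strictConvexOn_log_Gamma.2 (mem_Ioi.mpr hx) (mem_Ioi.mpr hy) hxy
    one_half_pos one_half_pos (add_halves 1)
  rw [show (1 / 2 : ℝ) • x + (1 / 2 : ℝ) • y = (x + y) / 2 by simp only [smul_eq_mul]; ring]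
    at hmid
  simp only [Function.comp_apply, smul_eq_mul] at hmid
  have hΓx := Gamma_pos_of_pos hx
  have hΓy := Gamma_pos_of_pos hy
  rw [← log_lt_log_iff (by positivity) (by positivity), log_pow, log_mul hΓx.ne' hΓy.ne']
  push_cast
  linarith

theorem stmt_0 :
    (∀ α : ℝ, 0 < α → α < 2 →
      Real.sin (Real.pi * α / 2) * (Real.Gamma ((α + 1) / 2)) ^ 2 / Real.Gamma α ≤
        (Real.Gamma ((α + 1) / 2)) ^ 2 / Real.Gamma α) ∧
    (∀ α : ℝ, (0 < α ∧ α < 1) ∨ (1 < α ∧ α < 2) →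
      (Real.Gamma ((α + 1) / 2)) ^ 2 / Real.Gamma α < 1) ∧
    (Real.Gamma (((1 : ℝ) + 1) / 2)) ^ 2 / Real.Gamma 1 = 1 := by
  refine ⟨fun α hα _ => ?_, fun α hα => ?_, by norm_num [Gamma_one]⟩
  · exact div_le_div_of_nonneg_right (mul_le_of_le_one_left (sq_nonneg _) (sin_le_one _))
      (Gamma_pos_of_pos hα).le
  · have hα0 : 0 < α := by rcases hα with ⟨h, _⟩ | ⟨h, _⟩ <;> linarith
    have hα1 : α ≠ 1 := by rcases hα with ⟨_, h⟩ | ⟨h, _⟩ <;> linarith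
    rw [div_lt_one (Gamma_pos_of_pos hα0)]
    simpa [Gamma_one] using Gamma_midpoint_sq_lt_mul hα0 one_pos hα1
end

section
/- For α ∈ (0,2) and β ∈ (-1, α) with β(α-β-1) > 0, one has Γ(α) - Γ(β+1)·Γ(α-β) > 0; equivalently 1/α - B(β+1, α-β) > 0, where B denotes the Euler beta function. Moreover this expression equals 0 when β = 0 or β = α-1. -/
/-!
`log Γ` is strictly convex on `(0, ∞)`: it is the sum of the convex `x ↦ log Γ(x + 1)` and the
strictly convex `x ↦ -log x`. Under the hypotheses `β + 1` and `α - β` lie strictly between `1`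
and `α` and add up to `α + 1`, so strict convexity gives
`log Γ(β + 1) + log Γ(α - β) < log Γ(α) + log Γ(1) = log Γ(α)`. The second form follows from
`Γ(α + 1) = α Γ(α)`, and at `β = 0` or `β = α - 1` the product is `Γ(1) Γ(α) = Γ(α)`.
-/

open Set

theorem StrictConvexOn.add_lt_add_of_mem_openSegment {𝕜 E β : Type*} [CommRing 𝕜]
    [PartialOrder 𝕜] [IsOrderedRing 𝕜] [AddCommGroup E] [Module 𝕜 E] [AddCommGroup β]
    [PartialOrder β] [IsOrderedCancelAddMonoid β] [Module 𝕜 β] {s : Set E} {f : E → β}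
    (hf : StrictConvexOn 𝕜 s f) {a b x : E} (ha : a ∈ s) (hb : b ∈ s) (hab : a ≠ b)
    (hx : x ∈ openSegment 𝕜 a b) : f x + f (a + b - x) < f a + f b := by
  obtain ⟨p, q, hp, hq, hpq, rfl⟩ := hx
  have hy : a + b - (p • a + q • b) = q • a + p • b := by
    linear_combination (norm := module) -(hpq • (a + b))
  calc f (p • a + q • b) + f (a + b - (p • a + q • b))
      < (p • f a + q • f b) + (q • f a + p • f b) := by
        rw [hy]
        exact add_lt_add (hf.2 ha hb hab hp hq hpq) (hf.2 ha hb hab hq hp (by rwa [add_comm]))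
    _ = f a + f b := by linear_combination (norm := module) hpq • (f a + f b)

namespace Real

theorem strictConvexOn_log_Gamma : StrictConvexOn ℝ (Ioi 0) (log ∘ Gamma) := by
  have hshift : ConvexOn ℝ (Ioi 0) fun x => log (Gamma (x + 1)) :=
    (convexOn_log_Gamma.translate_left 1).subset
      (fun x (hx : 0 < x) => show (0 : ℝ) < 1 + x by linarith) (convex_Ioi 0)
  refine (hshift.add_strictConvexOn strictConcaveOn_log_Ioi.neg).congr fun x (hx : 0 < x) => ?_
  simp only [Pi.add_apply, Pi.neg_apply, Function.comp_apply, Gamma_add_one hx.ne',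
    log_mul hx.ne' (Gamma_pos_of_pos hx).ne']
  ring

theorem Gamma_mul_Gamma_lt_of_mem_openSegment {a b x : ℝ} (ha : 0 < a) (hb : 0 < b)
    (hab : a ≠ b) (hx : x ∈ openSegment ℝ a b) :
    Gamma x * Gamma (a + b - x) < Gamma a * Gamma b := by
  have hx₀ : 0 < x := (convex_Ioi 0).openSegment_subset (show a ∈ Ioi 0 from ha) hb hx
  have hy₀ : 0 < a + b - x := by
    obtain ⟨p, q, hp, hq, hpq, rfl⟩ := hx
    simp only [smul_eq_mul]
    nlinarith
  have hlog := strictConvexOn_log_Gamma.add_lt_add_of_mem_openSegment ha hb hab hx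
  simp only [Function.comp_apply] at hlog
  rwa [← log_mul (Gamma_pos_of_pos hx₀).ne' (Gamma_pos_of_pos hy₀).ne',
    ← log_mul (Gamma_pos_of_pos ha).ne' (Gamma_pos_of_pos hb).ne',
    log_lt_log_iff (by positivity [Gamma_pos_of_pos hx₀, Gamma_pos_of_pos hy₀])
      (by positivity)] at hlog

theorem one_div_sub_div_Gamma_add_one {s : ℝ} (hs : 0 < s) (c : ℝ) :
    1 / s - c / Gamma (s + 1) = (Gamma s - c) / Gamma (s + 1) := by
  rw [Gamma_add_one hs.ne']
  field_simp [(Gamma_pos_of_pos hs).ne']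

end Real

theorem stmt_1_general (α : ℝ) (hα0 : 0 < α) :
    (∀ β : ℝ, -1 < β → β < α → 0 < β * (α - β - 1) →
      0 < Real.Gamma α - Real.Gamma (β + 1) * Real.Gamma (α - β) ∧
      0 < 1 / α - Real.Gamma (β + 1) * Real.Gamma (α - β) / Real.Gamma (α + 1)) ∧
    (∀ β : ℝ, β = 0 ∨ β = α - 1 →
      1 / α - Real.Gamma (β + 1) * Real.Gamma (α - β) / Real.Gamma (α + 1) = 0) := by
  refine ⟨fun β _ _ hβ => ?_, fun β hβ => ?_⟩
  · have hmem : β + 1 ∈ openSegment ℝ α 1 := by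
      rcases pos_and_pos_or_neg_and_neg_of_mul_pos hβ with ⟨h₁, h₂⟩ | ⟨h₁, h₂⟩
      · rw [openSegment_symm, openSegment_eq_Ioo (by linarith)]
        constructor <;> linarith
      · rw [openSegment_eq_Ioo (by linarith)]
        constructor <;> linarith
    have hα1 : α ≠ 1 := by
      rintro rfl
      nlinarith [sq_nonneg β]
    have hlt := Real.Gamma_mul_Gamma_lt_of_mem_openSegment hα0 one_pos hα1 hmem
    rw [show α + 1 - (β + 1) = α - β by ring, Real.Gamma_one, mul_one] at hlt
    have hpos := sub_pos.2 hlt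
    refine ⟨hpos, ?_⟩
    rw [Real.one_div_sub_div_Gamma_add_one hα0]
    exact div_pos hpos (Real.Gamma_pos_of_pos (by linarith))
  · rw [Real.one_div_sub_div_Gamma_add_one hα0]
    rcases hβ with rfl | rfl <;> simp

theorem stmt_1 (α : ℝ) (hα0 : 0 < α) (hα2 : α < 2) :
    (∀ β : ℝ, -1 < β → β < α → 0 < β * (α - β - 1) →
      0 < Real.Gamma α - Real.Gamma (β + 1) * Real.Gamma (α - β) ∧
      0 < 1 / α - Real.Gamma (β + 1) * Real.Gamma (α - β) / Real.Gamma (α + 1)) ∧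
    (∀ β : ℝ, β = 0 ∨ β = α - 1 →
      1 / α - Real.Gamma (β + 1) * Real.Gamma (α - β) / Real.Gamma (α + 1) = 0) :=
  stmt_1_general α hα0
end

section
/- For w > 0, ∫_{-∞}^{∞} y²/((y²+1)(y²+w)²) dy = π/(2·√w·(√w+1)²). -/
/-!
Write `w = s²`. For `s ≠ 1` the partial-fraction decomposition of the integrand has the explicit
antiderivative `a arctan y + b arctan (y / s) + c y / (y² + s²)`, and the improper fundamental
theorem of calculus gives the integral as `(a + b) π`. For `s = 1` the poles at `±i` merge into a
triple pole and the antiderivative is `arctan y / 8 + y / (8 (y² + 1)) - y / (4 (y² + 1)²)`.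
-/

open Real MeasureTheory Filter Topology

lemma tendsto_div_sq_add_pow_nhds_zero {l : Filter ℝ} (hl : Tendsto (|·|) l atTop) {c : ℝ}
    (hc : 0 < c) {n : ℕ} (hn : n ≠ 0) : Tendsto (fun y : ℝ => y / (y ^ 2 + c) ^ n) l (𝓝 0) := by
  refine squeeze_zero_norm' ?_ hl.inv_tendsto_atTop
  filter_upwards [hl.eventually_ge_atTop 1] with y hy
  have hy0 : 0 < |y| := one_pos.trans_le hy
  have hsq : |y| * |y| ≤ (y ^ 2 + c) ^ n := calc
    |y| * |y| ≤ y ^ 2 + c := by rw [abs_mul_abs_self]; nlinarith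
    _ ≤ (y ^ 2 + c) ^ n := le_self_pow₀ (by nlinarith [abs_mul_abs_self y]) hn
  show _ ≤ |y|⁻¹
  rw [norm_div, norm_pow, norm_of_nonneg (by positivity : 0 ≤ y ^ 2 + c), norm_eq_abs,
    div_le_iff₀ (by positivity), inv_mul_eq_div, le_div_iff₀ hy0]
  exact hsq

lemma tendsto_arctan_div_atTop {s : ℝ} (hs : 0 < s) :
    Tendsto (fun y => arctan (y / s)) atTop (𝓝 (π / 2)) :=
  (tendsto_arctan_atTop.mono_right nhdsWithin_le_nhds).comp (tendsto_id.atTop_div_const hs)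

lemma tendsto_arctan_div_atBot {s : ℝ} (hs : 0 < s) :
    Tendsto (fun y => arctan (y / s)) atBot (𝓝 (-(π / 2))) :=
  (tendsto_arctan_atBot.mono_right nhdsWithin_le_nhds).comp (tendsto_id.atBot_div_const hs)

lemma hasDerivAt_arctan_div {s : ℝ} (hs : s ≠ 0) (y : ℝ) :
    HasDerivAt (fun y => arctan (y / s)) (s / (y ^ 2 + s ^ 2)) y := by
  refine ((hasDerivAt_arctan (y / s)).comp y ((hasDerivAt_id y).div_const s)).congr_deriv ?_
  field_simp
  ring

lemma hasDerivAt_div_sq_add {c : ℝ} (hc : 0 < c) (y : ℝ) :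
    HasDerivAt (fun y => y / (y ^ 2 + c)) ((c - y ^ 2) / (y ^ 2 + c) ^ 2) y := by
  have hq : y ^ 2 + c ≠ 0 := by positivity
  refine ((hasDerivAt_id y).div ((hasDerivAt_pow 2 y).add_const c) hq).congr_deriv ?_
  simp only [id, Nat.cast_ofNat]
  ring

lemma hasDerivAt_div_sq_add_sq {c : ℝ} (hc : 0 < c) (y : ℝ) :
    HasDerivAt (fun y => y / (y ^ 2 + c) ^ 2) ((c - 3 * y ^ 2) / (y ^ 2 + c) ^ 3) y := by
  have hq : y ^ 2 + c ≠ 0 := by positivity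
  refine ((hasDerivAt_id y).div (((hasDerivAt_pow 2 y).add_const c).pow 2)
    (pow_ne_zero 2 hq)).congr_deriv ?_
  simp only [id, Pi.pow_apply, Nat.cast_ofNat]
  field_simp
  ring

lemma integrable_sq_div_sq_add_one_mul_sq_add_sq {c : ℝ} (hc : 0 < c) :
    Integrable fun y : ℝ => y ^ 2 / ((y ^ 2 + 1) * (y ^ 2 + c) ^ 2) := by
  refine (integrable_inv_one_add_sq.const_mul (4 * c)⁻¹).mono' ?_ (ae_of_all _ fun y => ?_)
  · exact Measurable.aestronglyMeasurable (by fun_prop)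
  · -- AM-GM: `4 c y² ≤ (y² + c)²`
    rw [norm_of_nonneg (by positivity), div_le_iff₀ (by positivity), mul_comm, ← mul_assoc,
      ← div_eq_mul_inv, ← div_eq_mul_inv, div_div, le_div_iff₀ (by positivity)]
    nlinarith [sq_nonneg (y ^ 2 - c), sq_nonneg y]

theorem integral_sq_div_sq_add_one_mul_sq_add_sq_sq {s : ℝ} (hs : 0 < s) (hs1 : s ≠ 1) :
    ∫ y : ℝ, y ^ 2 / ((y ^ 2 + 1) * (y ^ 2 + s ^ 2) ^ 2) = π / (2 * s * (s + 1) ^ 2) := by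
  have hs2 : s ^ 2 - 1 ≠ 0 := by
    rw [show s ^ 2 - 1 = (s - 1) * (s + 1) by ring]
    exact mul_ne_zero (sub_ne_zero.2 hs1) (by positivity)
  -- `y² / ((y² + 1)(y² + s²)²) = a / (y² + 1) + b s / (y² + s²) + c (s² - y²) / (y² + s²)²`
  set a := -1 / (s ^ 2 - 1) ^ 2
  set b := (s ^ 2 + 1) / (2 * s * (s ^ 2 - 1) ^ 2)
  set c := 1 / (2 * (s ^ 2 - 1))
  have hF (y : ℝ) : HasDerivAt
      (fun y => a * arctan y + b * arctan (y / s) + c * (y / (y ^ 2 + s ^ 2)))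
      (y ^ 2 / ((y ^ 2 + 1) * (y ^ 2 + s ^ 2) ^ 2)) y := by
    refine ((((hasDerivAt_arctan y).const_mul a).add
      ((hasDerivAt_arctan_div hs.ne' y).const_mul b)).add
      ((hasDerivAt_div_sq_add (by positivity) y).const_mul c)).congr_deriv ?_
    have : y ^ 2 + s ^ 2 ≠ 0 := by positivity
    simp only [a, b, c]
    field_simp
    ring
  have hdecay (l : Filter ℝ) (hl : Tendsto (|·|) l atTop) :
      Tendsto (fun y : ℝ => y / (y ^ 2 + s ^ 2)) l (𝓝 0) := by
    simpa using tendsto_div_sq_add_pow_nhds_zero hl (by positivity : 0 < s ^ 2) one_ne_zero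
  have htop := (((tendsto_arctan_atTop.mono_right nhdsWithin_le_nhds).const_mul a).add
    ((tendsto_arctan_div_atTop hs).const_mul b)).add
    ((hdecay atTop tendsto_abs_atTop_atTop).const_mul c)
  have hbot := (((tendsto_arctan_atBot.mono_right nhdsWithin_le_nhds).const_mul a).add
    ((tendsto_arctan_div_atBot hs).const_mul b)).add
    ((hdecay atBot tendsto_abs_atBot_atTop).const_mul c)
  rw [integral_of_hasDerivAt_of_tendsto hF
    (integrable_sq_div_sq_add_one_mul_sq_add_sq (by positivity)) hbot htop]
  simp only [a, b]
  field_simp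
  ring

theorem integral_sq_div_sq_add_one_mul_sq_add_one_sq :
    ∫ y : ℝ, y ^ 2 / ((y ^ 2 + 1) * (y ^ 2 + 1) ^ 2) = π / 8 := by
  have hF (y : ℝ) : HasDerivAt
      (fun y => arctan y / 8 + (y / (y ^ 2 + 1)) / 8 - (y / (y ^ 2 + 1) ^ 2) / 4)
      (y ^ 2 / ((y ^ 2 + 1) * (y ^ 2 + 1) ^ 2)) y := by
    refine ((((hasDerivAt_arctan y).div_const 8).add
      ((hasDerivAt_div_sq_add one_pos y).div_const 8)).sub
      ((hasDerivAt_div_sq_add_sq one_pos y).div_const 4)).congr_deriv ?_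
    have : y ^ 2 + 1 ≠ 0 := by positivity
    field_simp
    ring
  have hdecay (l : Filter ℝ) (hl : Tendsto (|·|) l atTop) :
      Tendsto (fun y : ℝ => y / (y ^ 2 + 1)) l (𝓝 0) := by
    simpa using tendsto_div_sq_add_pow_nhds_zero hl one_pos one_ne_zero
  have htop := (((tendsto_arctan_atTop.mono_right nhdsWithin_le_nhds).div_const 8).add
    ((hdecay atTop tendsto_abs_atTop_atTop).div_const 8)).sub
    ((tendsto_div_sq_add_pow_nhds_zero tendsto_abs_atTop_atTop one_pos two_ne_zero).div_const 4)
  have hbot := (((tendsto_arctan_atBot.mono_right nhdsWithin_le_nhds).div_const 8).add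
    ((hdecay atBot tendsto_abs_atBot_atTop).div_const 8)).sub
    ((tendsto_div_sq_add_pow_nhds_zero tendsto_abs_atBot_atTop one_pos two_ne_zero).div_const 4)
  rw [integral_of_hasDerivAt_of_tendsto hF (integrable_sq_div_sq_add_one_mul_sq_add_sq one_pos)
    hbot htop]
  ring

theorem stmt_5 (w : ℝ) (hw : 0 < w) :
    ∫ y : ℝ, y ^ 2 / ((y ^ 2 + 1) * (y ^ 2 + w) ^ 2) =
      Real.pi / (2 * Real.sqrt w * (Real.sqrt w + 1) ^ 2) := by
  obtain ⟨s, hs, rfl⟩ : ∃ s, 0 < s ∧ w = s ^ 2 := ⟨√w, sqrt_pos.2 hw, (sq_sqrt hw.le).symm⟩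
  rw [sqrt_sq hs.le]
  rcases eq_or_ne s 1 with rfl | hs1
  · rw [one_pow, integral_sq_div_sq_add_one_mul_sq_add_one_sq]
    norm_num
  · exact integral_sq_div_sq_add_one_mul_sq_add_sq_sq hs hs1
end

section
/- The double integral ∫₀^∞ ∫₀^1 y^{1/2}·ln(w)/((y+1)(w+y)²) dw dy plus ∫₀^∞ ∫₁^∞ y^{1/2}·ln(w)/((y+1)(w+y)²) dw dy equals 0; i.e., ∫₀^∞ ∫₀^∞ √y·ln(w)/((y+1)(w+y)²) dw dy = 0 (with the integral of the positive and negative parts both finite). -/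
/-!
Substituting `w = y t`, the inner integral becomes
`(log y * ∫ (t + 1)⁻² + ∫ log t / (t + 1)²) / y`, and the second integral vanishes because the
inversion `t ↦ 1 / t` (with `dt ↦ dt / t²`) changes the sign of its integrand. So the inner
integral is `log y / y`, and the outer integrand `√y log y / ((y + 1) y)` is odd under the same
inversion, hence integrates to `0`. Absolute integrability: `|log x| ≤ (x ^ ε + x ^ (-ε)) / ε`
reduces every bound to the integrable functions `x ^ (s - 1) / (x + 1)`, `0 < s < 1`.
-/

open MeasureTheory Set Real Filter

lemma abs_log_le_rpow_add_rpow_neg {x ε : ℝ} (hx : 0 < x) (hε : 0 < ε) :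
    |log x| ≤ (x ^ ε + x ^ (-ε)) / ε := by
  have hpos := log_le_rpow_div hx.le hε
  have hneg := log_le_rpow_div (inv_pos.mpr hx).le hε
  rw [log_inv, inv_rpow hx.le, ← rpow_neg hx.le] at hneg
  rw [add_div, abs_le]
  constructor <;>
    linarith [div_pos (rpow_pos_of_pos hx ε) hε, div_pos (rpow_pos_of_pos hx (-ε)) hε]

lemma integrableOn_Ioi_rpow_sub_one_div_add_one {s : ℝ} (hs0 : 0 < s) (hs1 : s < 1) :
    IntegrableOn (fun x : ℝ => x ^ (s - 1) / (x + 1)) (Ioi 0) := by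
  have hmeas : AEStronglyMeasurable (fun x : ℝ => x ^ (s - 1) / (x + 1)) :=
    (by fun_prop : Measurable fun x : ℝ => x ^ (s - 1) / (x + 1)).aestronglyMeasurable
  rw [← Ioc_union_Ioi_eq_Ioi zero_le_one]
  refine IntegrableOn.union ?_ ?_
  · refine Integrable.mono' (g := fun x => x ^ (s - 1)) ?_ hmeas.restrict ?_
    · rw [← IntegrableOn, ← intervalIntegrable_iff_integrableOn_Ioc_of_le zero_le_one]
      exact intervalIntegral.intervalIntegrable_rpow' (by linarith)
    · filter_upwards [ae_restrict_mem measurableSet_Ioc] with x hx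
      rw [norm_of_nonneg (by have := hx.1; positivity)]
      exact div_le_self (by have := hx.1; positivity) (by linarith [hx.1])
  · refine Integrable.mono' (g := fun x => x ^ (s - 2))
      (integrableOn_Ioi_rpow_of_lt (by linarith) one_pos) hmeas.restrict ?_
    filter_upwards [ae_restrict_mem measurableSet_Ioi] with x (hx : 1 < x)
    have hx0 : 0 < x := one_pos.trans hx
    have hpow : x ^ (s - 2) = x ^ (s - 1) / x := by rw [← rpow_sub_one hx0.ne']; ring_nf
    rw [norm_of_nonneg (by positivity), hpow]
    exact div_le_div_of_nonneg_left (by positivity) hx0 (by linarith)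

lemma integrableOn_Ioi_rpow_sub_one_mul_abs_log_div_add_one {s : ℝ} (hs0 : 0 < s) (hs1 : s < 1) :
    IntegrableOn (fun x : ℝ => x ^ (s - 1) * |log x| / (x + 1)) (Ioi 0) := by
  obtain ⟨ε, hε0, hεs, hε1⟩ : ∃ ε, 0 < ε ∧ ε < s ∧ ε < 1 - s :=
    ⟨min s (1 - s) / 2, by positivity, by linarith [min_le_left s (1 - s)],
      by linarith [min_le_right s (1 - s)]⟩
  have hint := ((integrableOn_Ioi_rpow_sub_one_div_add_one (s := s + ε) (by linarith)
    (by linarith)).add (integrableOn_Ioi_rpow_sub_one_div_add_one (s := s - ε) (by linarith)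
    (by linarith))).div_const ε
  refine hint.mono' (by fun_prop : Measurable _).aestronglyMeasurable ?_
  filter_upwards [ae_restrict_mem measurableSet_Ioi] with x (hx : 0 < x)
  have hlog := mul_le_mul_of_nonneg_left (abs_log_le_rpow_add_rpow_neg hx hε0)
    (rpow_nonneg hx.le (s - 1))
  rw [mul_div_assoc', mul_add, ← rpow_add hx, ← rpow_add hx, ← sub_eq_add_neg,
    sub_add_eq_add_sub, sub_right_comm] at hlog
  rw [norm_of_nonneg (by positivity), Pi.add_apply, ← add_div, div_right_comm]
  exact div_le_div_of_nonneg_right hlog (by positivity)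

lemma integrableOn_Ioi_abs_log_div_add_one_sq :
    IntegrableOn (fun x : ℝ => |log x| / (x + 1) ^ 2) (Ioi 0) := by
  refine (integrableOn_Ioi_rpow_sub_one_mul_abs_log_div_add_one (s := 1 / 2) (by norm_num)
    (by norm_num)).mono' (by fun_prop : Measurable _).aestronglyMeasurable ?_
  filter_upwards [ae_restrict_mem measurableSet_Ioi] with x (hx : 0 < x)
  have hroot : x ^ (1 / 2 : ℝ) ≤ x + 1 := by
    rw [← sqrt_eq_rpow]; nlinarith [sq_sqrt hx.le, sq_nonneg (√x - 1 / 2)]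
  rw [norm_of_nonneg (by positivity)]
  calc |log x| / (x + 1) ^ 2 = (x + 1)⁻¹ * |log x| / (x + 1) := by
        rw [sq, ← div_div]; ring
    _ ≤ x ^ (1 / 2 - 1 : ℝ) * |log x| / (x + 1) := by
      rw [show (1 / 2 - 1 : ℝ) = -(1 / 2) by norm_num, rpow_neg hx.le]
      gcongr

lemma integral_Ioi_eq_zero_of_comp_inv {f : ℝ → ℝ}
    (hf : ∀ x ∈ Ioi (0 : ℝ), f x⁻¹ = -(x ^ 2 * f x)) :
    ∫ x in Ioi 0, f x = 0 := by
  have hsubst := integral_comp_rpow_Ioi f (p := -1) (by norm_num)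
  have hneg : ∫ x in Ioi 0, (|(-1 : ℝ)| * x ^ ((-1 : ℝ) - 1)) • f (x ^ (-1 : ℝ)) =
      -∫ x in Ioi 0, f x := by
    rw [← integral_neg]
    refine setIntegral_congr_fun measurableSet_Ioi fun x (hx : 0 < x) => ?_
    rw [rpow_neg_one, hf x hx, show (-1 : ℝ) - 1 = -2 by norm_num, rpow_neg hx.le, rpow_two,
      smul_eq_mul, abs_neg, abs_one]
    field_simp
  linarith

lemma hasDerivAt_neg_inv_add_one {x : ℝ} (hx : x + 1 ≠ 0) :
    HasDerivAt (fun x : ℝ => -(x + 1)⁻¹) ((x + 1) ^ 2)⁻¹ x := by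
  have := ((hasDerivAt_id x).add_const 1).inv hx |>.neg
  exact this.congr_deriv (by simp [neg_div])

lemma tendsto_neg_inv_add_one_atTop : Tendsto (fun x : ℝ => -(x + 1)⁻¹) atTop (nhds 0) := by
  simpa using
    (tendsto_inv_atTop_zero.comp (tendsto_atTop_add_const_right _ (1 : ℝ) tendsto_id)).neg

lemma integrableOn_Ioi_inv_add_one_sq : IntegrableOn (fun x : ℝ => ((x + 1) ^ 2)⁻¹) (Ioi 0) :=
  integrableOn_Ioi_deriv_of_nonneg'
    (fun x (hx : 0 ≤ x) => hasDerivAt_neg_inv_add_one (by positivity))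
    (fun _ _ => by positivity) tendsto_neg_inv_add_one_atTop

lemma integral_Ioi_inv_add_one_sq : ∫ x in Ioi (0 : ℝ), ((x + 1) ^ 2)⁻¹ = 1 := by
  simpa using integral_Ioi_of_hasDerivAt_of_tendsto'
    (fun x (hx : 0 ≤ x) => hasDerivAt_neg_inv_add_one (by positivity))
    integrableOn_Ioi_inv_add_one_sq tendsto_neg_inv_add_one_atTop

lemma integral_Ioi_log_div_add_one_sq : ∫ x in Ioi (0 : ℝ), log x / (x + 1) ^ 2 = 0 :=
  integral_Ioi_eq_zero_of_comp_inv fun x (hx : 0 < x) => by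
    rw [log_inv]
    field_simp
    ring

lemma integral_Ioi_sqrt_mul_log_div : ∫ y in Ioi (0 : ℝ), √y * log y / ((y + 1) * y) = 0 :=
  integral_Ioi_eq_zero_of_comp_inv fun x (hx : 0 < x) => by
    have hs : √x * √x = x := mul_self_sqrt hx.le
    have hpos : 0 < √x := sqrt_pos.mpr hx
    rw [log_inv, sqrt_inv]
    field_simp
    linear_combination (log x * (1 + x)) * hs

lemma abs_log_mul_div_mul_add_sq_le {y t : ℝ} (hy : 0 < y) (ht : 0 < t) :
    |log (y * t)| / (y * t + y) ^ 2 ≤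
      (|log y| * ((t + 1) ^ 2)⁻¹ + |log t| / (t + 1) ^ 2) / y ^ 2 := by
  rw [log_mul hy.ne' ht.ne', show y * t + y = y * (t + 1) by ring, mul_pow]
  calc |log y + log t| / (y ^ 2 * (t + 1) ^ 2) = |log y + log t| / (t + 1) ^ 2 / y ^ 2 := by
        rw [div_div, mul_comm]
    _ ≤ (|log y| + |log t|) / (t + 1) ^ 2 / y ^ 2 := by gcongr; exact abs_add_le _ _
    _ = _ := by ring

lemma integrableOn_Ioi_abs_log_div_add_sq {y : ℝ} (hy : 0 < y) :
    IntegrableOn (fun w : ℝ => |log w| / (w + y) ^ 2) (Ioi 0) := by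
  rw [← mul_zero y, ← integrableOn_Ioi_comp_mul_left_iff _ _ hy]
  refine Integrable.mono' (((integrableOn_Ioi_inv_add_one_sq.const_mul |log y|).add
    integrableOn_Ioi_abs_log_div_add_one_sq).div_const (y ^ 2))
    (by fun_prop : Measurable _).aestronglyMeasurable ?_
  filter_upwards [ae_restrict_mem measurableSet_Ioi] with t (ht : 0 < t)
  rw [norm_of_nonneg (by positivity)]
  exact abs_log_mul_div_mul_add_sq_le hy ht

lemma integral_Ioi_abs_log_div_add_sq_le {y : ℝ} (hy : 0 < y) :
    ∫ w in Ioi 0, |log w| / (w + y) ^ 2 ≤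
      (|log y| + ∫ x in Ioi 0, |log x| / (x + 1) ^ 2) / y := by
  have hscale := integral_comp_mul_left_Ioi (fun w => |log w| / (w + y) ^ 2) 0 hy
  rw [mul_zero, smul_eq_mul] at hscale
  have hle : ∫ t in Ioi 0, |log (y * t)| / (y * t + y) ^ 2 ≤
      (|log y| + ∫ x in Ioi 0, |log x| / (x + 1) ^ 2) / y ^ 2 := by
    refine (setIntegral_mono_on ?_ ?_ measurableSet_Ioi
      fun t ht => abs_log_mul_div_mul_add_sq_le hy ht).trans_eq ?_
    · refine (integrableOn_Ioi_comp_mul_left_iff (fun w => |log w| / (w + y) ^ 2) 0 hy).mpr ?_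
      rw [mul_zero]
      exact integrableOn_Ioi_abs_log_div_add_sq hy
    · exact ((integrableOn_Ioi_inv_add_one_sq.const_mul _).add
        integrableOn_Ioi_abs_log_div_add_one_sq).div_const _
    · rw [integral_div, integral_add (integrableOn_Ioi_inv_add_one_sq.const_mul _)
        integrableOn_Ioi_abs_log_div_add_one_sq, integral_const_mul, integral_Ioi_inv_add_one_sq,
        mul_one]
  rw [hscale] at hle
  calc _ = y * (y⁻¹ * ∫ w in Ioi 0, |log w| / (w + y) ^ 2) := by field_simp
    _ ≤ y * ((|log y| + ∫ x in Ioi 0, |log x| / (x + 1) ^ 2) / y ^ 2) := by gcongr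
    _ = _ := by field_simp

lemma integral_Ioi_log_div_add_sq {y : ℝ} (hy : 0 < y) :
    ∫ w in Ioi 0, log w / (w + y) ^ 2 = log y / y := by
  have hscale := integral_comp_mul_left_Ioi (fun w => log w / (w + y) ^ 2) 0 hy
  rw [mul_zero, smul_eq_mul] at hscale
  have hlog : IntegrableOn (fun t : ℝ => log t / (t + 1) ^ 2) (Ioi 0) :=
    integrableOn_Ioi_abs_log_div_add_one_sq.mono' (by fun_prop : Measurable _).aestronglyMeasurable
      (ae_of_all _ fun t => by rw [norm_div, norm_pow, norm_eq_abs, norm_eq_abs, sq_abs])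
  have hval : ∫ t in Ioi 0, log (y * t) / (y * t + y) ^ 2 = log y / y ^ 2 := by
    calc _ = ∫ t in Ioi 0, (log y * ((t + 1) ^ 2)⁻¹ + log t / (t + 1) ^ 2) / y ^ 2 :=
          setIntegral_congr_fun measurableSet_Ioi fun t (ht : 0 < t) => by
            rw [log_mul hy.ne' ht.ne']; field_simp
      _ = _ := by
        rw [integral_div, integral_add (integrableOn_Ioi_inv_add_one_sq.const_mul _) hlog,
          integral_const_mul, integral_Ioi_inv_add_one_sq, integral_Ioi_log_div_add_one_sq,
          mul_one, add_zero]
  rw [hscale] at hval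
  field_simp at hval ⊢
  linarith

lemma integrableOn_Ioi_sqrt_div_add_one_mul_abs_log_add_div (C : ℝ) :
    IntegrableOn (fun y : ℝ => √y / (y + 1) * ((|log y| + C) / y)) (Ioi 0) := by
  refine ((integrableOn_Ioi_rpow_sub_one_mul_abs_log_div_add_one (s := 1 / 2) (by norm_num)
    (by norm_num)).add ((integrableOn_Ioi_rpow_sub_one_div_add_one (s := 1 / 2) (by norm_num)
    (by norm_num)).const_mul C)).congr_fun (fun y (hy : 0 < y) => ?_) measurableSet_Ioi
  rw [Pi.add_apply, rpow_sub_one hy.ne', ← sqrt_eq_rpow]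
  field_simp

lemma integrableOn_sqrt_mul_abs_log_div :
    IntegrableOn (fun p : ℝ × ℝ => √p.1 * |log p.2| / ((p.1 + 1) * (p.2 + p.1) ^ 2))
      (Ioi 0 ×ˢ Ioi 0) := by
  set F : ℝ × ℝ → ℝ := fun p => √p.1 * |log p.2| / ((p.1 + 1) * (p.2 + p.1) ^ 2)
  have hF : ∀ y w, F (y, w) = √y / (y + 1) * (|log w| / (w + y) ^ 2) := fun y w => by
    simp only [F]; rw [div_mul_div_comm]
  have hmeas : AEStronglyMeasurable F ((volume.restrict (Ioi 0)).prod (volume.restrict (Ioi 0))) :=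
    (by fun_prop : Measurable F).aestronglyMeasurable
  rw [IntegrableOn, Measure.volume_eq_prod, ← Measure.prod_restrict, integrable_prod_iff hmeas]
  refine ⟨?_, ?_⟩
  · filter_upwards [ae_restrict_mem measurableSet_Ioi] with y (hy : 0 < y)
    simpa only [hF] using (integrableOn_Ioi_abs_log_div_add_sq hy).const_mul (√y / (y + 1))
  · refine (integrableOn_Ioi_sqrt_div_add_one_mul_abs_log_add_div
      (∫ x in Ioi 0, |log x| / (x + 1) ^ 2)).mono' hmeas.norm.integral_prod_right' ?_
    filter_upwards [ae_restrict_mem measurableSet_Ioi] with y (hy : 0 < y)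
    have hnorm : ∀ w, ‖F (y, w)‖ = √y / (y + 1) * (|log w| / (w + y) ^ 2) := fun w => by
      rw [hF, norm_of_nonneg (by positivity)]
    rw [norm_of_nonneg (integral_nonneg fun w => norm_nonneg _)]
    simp only [hnorm, integral_const_mul]
    gcongr
    exact integral_Ioi_abs_log_div_add_sq_le hy

theorem stmt_6 :
    MeasureTheory.IntegrableOn
      (fun p : ℝ × ℝ => Real.sqrt p.1 * |Real.log p.2| / ((p.1 + 1) * (p.2 + p.1) ^ 2))
      (Set.Ioi 0 ×ˢ Set.Ioi 0) ∧
    ∫ y in Set.Ioi (0 : ℝ), ∫ w in Set.Ioi (0 : ℝ),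
        Real.sqrt y * Real.log w / ((y + 1) * (w + y) ^ 2) = 0 := by
  refine ⟨integrableOn_sqrt_mul_abs_log_div, ?_⟩
  calc _ = ∫ y in Ioi (0 : ℝ), √y * log y / ((y + 1) * y) :=
        setIntegral_congr_fun measurableSet_Ioi fun y (hy : 0 < y) => by
          simp_rw [← div_mul_div_comm, integral_const_mul, integral_Ioi_log_div_add_sq hy]
    _ = 0 := integral_Ioi_sqrt_mul_log_div
end

section
/- For α ∈ (0,2) and x > 0, the principal-value integral p.v.∫₀^∞ (1 − z^β)/|1−z|^{α+1} dz over z ∈ (0,∞) with β ∈ (−1, α) exists (the limit as ε → 0⁺ of the integral over {z > 0 : |z−1| ≥ ε} exists and is finite), and equals −γ(α,β) where γ(α,β) = ∫₀^1 (t^β − 1)(1 − t^{α−β−1})/(1−t)^{α+1} dt; moreover γ(α,β) ≤ 0 when β(α−β−1) ≥ 0. -/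
/-!
Split the truncated domain into `(0, 1 - ε]` and `[1 + ε, ∞)`. The substitution `z = 1 / t` maps
the second piece onto `(0, 1 / (1 + ε))`, with new integrand
`(t ^ (α - 1) - t ^ (α - β - 1)) / (1 - t) ^ (α + 1)`. On `(0, 1 - ε]` the two integrands add up to
minus the integrand of `γ(α, β)`, which is integrable on `(0, 1)`: both of its numerator factors
vanish to first order at `t = 1` and `α < 2`. What remains is the integral over the gap
`(1 - ε, 1 / (1 + ε))`, of length `O(ε²)`, of a function of size `O(ε ^ (-α))`, and it tends to `0`.
The sign of `γ(α, β)` is read off pointwise: on `(0, 1)` the factors `t ^ β - 1` and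
`1 - t ^ (α - β - 1)` have the signs of `-β` and `α - β - 1`.
-/

open MeasureTheory Set Real Filter Topology

theorem exists_abs_le_mul_one_sub {u : ℝ → ℝ} {a : ℝ} (hu : ContDiffOn ℝ 1 u (Icc a 1))
    (hu1 : u 1 = 0) : ∃ C, 0 ≤ C ∧ ∀ t ∈ Icc a 1, |u t| ≤ C * (1 - t) := by
  obtain ⟨K, hK⟩ := hu.exists_lipschitzOnWith one_ne_zero (convex_Icc a 1) isCompact_Icc
  refine ⟨K, K.2, fun t ht => ?_⟩
  have := hK.dist_le_mul t ht 1 ⟨ht.1.trans ht.2, le_rfl⟩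
  rwa [hu1, dist_zero_right, Real.norm_eq_abs, Real.dist_eq, abs_sub_comm,
    abs_of_nonneg (sub_nonneg.2 ht.2)] at this

theorem contDiffOn_rpow_const_Icc {a b : ℝ} (ha : 0 < a) (p : ℝ) :
    ContDiffOn ℝ 1 (fun t : ℝ => t ^ p) (Icc a b) := fun _ ht =>
  (contDiffAt_rpow_const_of_ne (ha.trans_le ht.1).ne').contDiffWithinAt

theorem integrableOn_rpow_Ioc_zero {p : ℝ} (hp : -1 < p) (c : ℝ) :
    IntegrableOn (fun t : ℝ => t ^ p) (Ioc 0 c) :=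
  (intervalIntegral.intervalIntegrable_rpow' hp).1

theorem MeasureTheory.IntegrableOn.div_one_sub_rpow {u : ℝ → ℝ} {a c : ℝ} (s : ℝ) (hc : c < 1)
    (hu : IntegrableOn u (Ioc a c)) : IntegrableOn (fun t => u t / (1 - t) ^ s) (Ioc a c) := by
  simp_rw [div_eq_mul_inv]
  refine hu.mul_continuousOn_of_subset ?_ measurableSet_Ioc isCompact_Icc Ioc_subset_Icc_self
  intro t ht
  have h1t : 0 < 1 - t := by linarith [ht.2]
  exact (((continuous_const.sub continuous_id).continuousAt.rpow_const (Or.inl h1t.ne')).inv₀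
    (rpow_pos_of_pos h1t s).ne').continuousWithinAt

theorem tendsto_setIntegral_Ioc_sub {f : ℝ → ℝ} {a b : ℝ} (hab : a < b)
    (hf : IntegrableOn f (Ioc a b)) :
    Tendsto (fun ε => ∫ t in Ioc a (b - ε), f t) (𝓝[>] 0) (𝓝 (∫ t in Ioc a b, f t)) := by
  have hcont := intervalIntegral.continuousOn_primitive_interval (f := f) (μ := volume)
    (a := a) (b := b) (by rwa [uIcc_of_le hab.le, integrableOn_Icc_iff_integrableOn_Ioc])
  rw [uIcc_of_le hab.le] at hcont
  have hshift : Tendsto (fun ε => b - ε) (𝓝[>] 0) (𝓝[Icc a b] b) := by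
    refine tendsto_nhdsWithin_of_tendsto_nhds_of_eventually_within _ ?_ ?_
    · exact ((continuous_sub_left b).tendsto' 0 b (sub_zero b)).mono_left nhdsWithin_le_nhds
    · filter_upwards [Ioo_mem_nhdsGT (sub_pos.2 hab)] with ε hε
      exact ⟨by linarith [hε.2], by linarith [hε.1]⟩
  rw [← intervalIntegral.integral_of_le hab.le]
  refine ((hcont b (right_mem_Icc.2 hab.le)).tendsto.comp hshift).congr' ?_
  filter_upwards [Ioo_mem_nhdsGT (sub_pos.2 hab)] with ε hε
  exact intervalIntegral.integral_of_le (by linarith [hε.2])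

noncomputable def powerKernel (α β z : ℝ) : ℝ := (1 - z ^ β) / |1 - z| ^ (α + 1)

noncomputable def invertedKernel (α β t : ℝ) : ℝ :=
  (t ^ (α - 1) - t ^ (α - β - 1)) / (1 - t) ^ (α + 1)

noncomputable def gammaIntegrand (α β t : ℝ) : ℝ :=
  (t ^ β - 1) * (1 - t ^ (α - β - 1)) / (1 - t) ^ (α + 1)

section Kernels

variable {α β : ℝ}

theorem integrableOn_invertedKernel (hα : 0 < α) (hβα : β < α) {c : ℝ} (hc : c < 1) :
    IntegrableOn (invertedKernel α β) (Ioc 0 c) :=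
  IntegrableOn.div_one_sub_rpow _ hc <|
    (integrableOn_rpow_Ioc_zero (by linarith) c).sub (integrableOn_rpow_Ioc_zero (by linarith) c)

theorem integrableOn_powerKernel_Ioc (hβ : -1 < β) {c : ℝ} (hc : c < 1) :
    IntegrableOn (powerKernel α β) (Ioc 0 c) := by
  have hu : IntegrableOn (fun t : ℝ => 1 - t ^ β) (Ioc 0 c) :=
    (integrableOn_const (by simp)).sub (integrableOn_rpow_Ioc_zero hβ c)
  refine (hu.div_one_sub_rpow (α + 1) hc).congr_fun (fun t ht => ?_) measurableSet_Ioc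
  rw [powerKernel, abs_of_nonneg (by linarith [ht.2])]

theorem powerKernel_add_invertedKernel {t : ℝ} (ht0 : 0 < t) (ht1 : t < 1) :
    powerKernel α β t + invertedKernel α β t = -gammaIntegrand α β t := by
  have h : t ^ (α - 1) = t ^ β * t ^ (α - β - 1) := by rw [← rpow_add ht0]; ring_nf
  rw [powerKernel, invertedKernel, gammaIntegrand, abs_of_pos (sub_pos.2 ht1), h]
  ring

theorem integrableOn_gammaIntegrand_Ioo_half_one (hα2 : α < 2) :
    IntegrableOn (gammaIntegrand α β) (Ioo (1 / 2) 1) := by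
  obtain ⟨C₁, -, hC₁⟩ := exists_abs_le_mul_one_sub (a := 1 / 2) (u := fun t => t ^ β - 1)
    ((contDiffOn_rpow_const_Icc (by norm_num) β).sub contDiffOn_const) (by simp)
  obtain ⟨C₂, -, hC₂⟩ := exists_abs_le_mul_one_sub (a := 1 / 2)
    (u := fun t => 1 - t ^ (α - β - 1))
    (contDiffOn_const.sub (contDiffOn_rpow_const_Icc (by norm_num) _)) (by simp)
  have hdom : IntegrableOn (fun t : ℝ => (1 - t) ^ (1 - α)) (Ioo (1 / 2) 1) := by
    have h := ((intervalIntegral.intervalIntegrable_rpow' (by linarith : -1 < 1 - α)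
      (a := 0) (b := 1 / 2)).comp_sub_left 1).symm
    rw [sub_zero, show (1 : ℝ) - 1 / 2 = 1 / 2 by norm_num] at h
    rwa [intervalIntegrable_iff_integrableOn_Ioo_of_le (by norm_num)] at h
  refine Integrable.mono' (hdom.const_mul (C₁ * C₂)) ?_ ?_
  · have : Measurable (gammaIntegrand α β) := by unfold gammaIntegrand; fun_prop
    exact this.aestronglyMeasurable
  refine ae_restrict_of_forall_mem measurableSet_Ioo fun t ht => ?_
  have h1t : 0 < 1 - t := sub_pos.2 ht.2
  have htI : t ∈ Icc (1 / 2) 1 := ⟨ht.1.le, ht.2.le⟩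
  calc ‖gammaIntegrand α β t‖
      = |t ^ β - 1| * |1 - t ^ (α - β - 1)| / (1 - t) ^ (α + 1) := by
        rw [gammaIntegrand, Real.norm_eq_abs, abs_div, abs_mul, abs_of_pos (rpow_pos_of_pos h1t _)]
    _ ≤ C₁ * (1 - t) * (C₂ * (1 - t)) / (1 - t) ^ (α + 1) := by
        refine div_le_div_of_nonneg_right ?_ (rpow_nonneg h1t.le _)
        exact mul_le_mul (hC₁ t htI) (hC₂ t htI) (abs_nonneg _) ((abs_nonneg _).trans (hC₁ t htI))
    _ = C₁ * C₂ * (1 - t) ^ (1 - α) := by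
        rw [show 1 - α = 2 - (α + 1) by ring, rpow_sub h1t, rpow_two]
        ring

theorem integrableOn_gammaIntegrand (hα0 : 0 < α) (hα2 : α < 2) (hβ : -1 < β) (hβα : β < α) :
    IntegrableOn (gammaIntegrand α β) (Ioc 0 1) := by
  rw [← Ioc_union_Ioc_eq_Ioc (by norm_num : (0 : ℝ) ≤ 1 / 2) (by norm_num : (1 / 2 : ℝ) ≤ 1)]
  refine IntegrableOn.union ?_ ?_
  · have hsum := (integrableOn_powerKernel_Ioc (α := α) hβ (by norm_num : (1 / 2 : ℝ) < 1)).add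
      (integrableOn_invertedKernel hα0 hβα (by norm_num : (1 / 2 : ℝ) < 1))
    refine hsum.neg.congr_fun (fun t ht => ?_) measurableSet_Ioc
    rw [Pi.neg_apply, Pi.add_apply, powerKernel_add_invertedKernel ht.1 (by linarith [ht.2]),
      neg_neg]
  · exact (integrableOn_Ioc_iff_integrableOn_Ioo).2 (integrableOn_gammaIntegrand_Ioo_half_one hα2)

theorem inv_rpow_two_mul_powerKernel_inv {x : ℝ} (hx0 : 0 < x) (hx1 : x < 1) :
    x ^ (-2 : ℝ) * powerKernel α β x⁻¹ = invertedKernel α β x := by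
  have h1x : 0 < 1 - x := sub_pos.2 hx1
  have habs : |1 - x⁻¹| = (1 - x) / x := by
    rw [abs_of_nonpos (by linarith [(one_le_inv₀ hx0).2 hx1.le])]
    field_simp
    ring
  have e1 : x ^ (α - 1) = x ^ (-2 : ℝ) * x ^ (α + 1) := by rw [← rpow_add hx0]; ring_nf
  have e2 : x ^ (α - β - 1) = x ^ (-2 : ℝ) * x ^ (α + 1) / x ^ β := by
    rw [← rpow_add hx0, ← rpow_sub hx0]; ring_nf
  rw [powerKernel, invertedKernel, habs, div_rpow h1x.le hx0.le, inv_rpow hx0.le, e1, e2]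
  have := (rpow_pos_of_pos hx0 β).ne'
  have := (rpow_pos_of_pos hx0 (α + 1)).ne'
  have := (rpow_pos_of_pos h1x (α + 1)).ne'
  field_simp

theorem indicator_powerKernel_rpow_neg_one {a : ℝ} (ha : 1 ≤ a) {x : ℝ} (hx : 0 < x) :
    (|(-1 : ℝ)| * x ^ ((-1 : ℝ) - 1)) • (Ioi a).indicator (powerKernel α β) (x ^ (-1 : ℝ))
      = (Ioo 0 a⁻¹).indicator (invertedKernel α β) x := by
  rw [rpow_neg_one, abs_neg, abs_one, one_mul, smul_eq_mul, show (-1 : ℝ) - 1 = -2 by norm_num]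
  by_cases hxa : x < a⁻¹
  · have hmem : x⁻¹ ∈ Ioi a := (lt_inv_comm₀ hx (by linarith)).1 hxa
    rw [indicator_of_mem hmem, indicator_of_mem (mem_Ioo.2 ⟨hx, hxa⟩),
      inv_rpow_two_mul_powerKernel_inv hx (hxa.trans_le (inv_le_one_of_one_le₀ ha))]
  · have hmem : x⁻¹ ∉ Ioi a := fun h => hxa ((lt_inv_comm₀ (by linarith) hx).1 h)
    rw [indicator_of_notMem hmem, indicator_of_notMem fun h => hxa h.2, mul_zero]

theorem integral_powerKernel_Ioi {a : ℝ} (ha : 1 ≤ a) :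
    ∫ z in Ioi a, powerKernel α β z = ∫ t in Ioo 0 a⁻¹, invertedKernel α β t := by
  have h := integral_comp_rpow_Ioi ((Ioi a).indicator (powerKernel α β)) (p := -1) (by norm_num)
  rw [setIntegral_congr_fun measurableSet_Ioi fun x hx => indicator_powerKernel_rpow_neg_one ha hx,
    setIntegral_indicator measurableSet_Ioo, setIntegral_indicator measurableSet_Ioi,
    Ioi_inter_Ioi, max_eq_right (by linarith), inter_eq_right.2 Ioo_subset_Ioi_self] at h
  exact h.symm

theorem integrableOn_powerKernel_Ioi (hα : 0 < α) (hβα : β < α) {a : ℝ} (ha : 1 < a) :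
    IntegrableOn (powerKernel α β) (Ioi a) := by
  have hinv : IntegrableOn ((Ioo 0 a⁻¹).indicator (invertedKernel α β)) (Ioi 0) := by
    rw [integrableOn_indicator_iff measurableSet_Ioo, inter_eq_left.2 Ioo_subset_Ioi_self]
    exact (integrableOn_invertedKernel hα hβα (inv_lt_one_of_one_lt₀ ha)).mono_set
      Ioo_subset_Ioc_self
  have h := (integrableOn_Ioi_comp_rpow_iff _ (p := -1) (by norm_num)).1 <|
    hinv.congr_fun (fun x hx => (indicator_powerKernel_rpow_neg_one ha.le hx).symm)
      measurableSet_Ioi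
  rwa [integrableOn_indicator_iff measurableSet_Ioi, Ioi_inter_Ioi,
    max_eq_left (by linarith)] at h

theorem setOf_pos_and_le_abs_sub_one {ε : ℝ} (hε : -1 < ε) :
    {z : ℝ | 0 < z ∧ ε ≤ |z - 1|} = Ioc 0 (1 - ε) ∪ Ici (1 + ε) := by
  ext z
  simp only [mem_ofPred_eq, mem_union, mem_Ioc, mem_Ici, le_abs]
  constructor
  · rintro ⟨hz, h | h⟩
    · exact Or.inr (by linarith)
    · exact Or.inl ⟨hz, by linarith⟩
  · rintro (⟨hz, h⟩ | h)
    · exact ⟨hz, Or.inr (by linarith)⟩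
    · exact ⟨by linarith, Or.inl (by linarith)⟩

theorem integral_powerKernel_truncated (hα : 0 < α) (hβ : -1 < β) (hβα : β < α) {ε : ℝ}
    (hε0 : 0 < ε) (hε1 : ε < 1) :
    ∫ z in {z : ℝ | 0 < z ∧ ε ≤ |z - 1|}, powerKernel α β z
      = -(∫ t in Ioc 0 (1 - ε), gammaIntegrand α β t)
        + ∫ t in Ioo (1 - ε) (1 + ε)⁻¹, invertedKernel α β t := by
  have hgap : 1 - ε < (1 + ε)⁻¹ := by
    rw [← one_div, lt_div_iff₀ (by linarith)]
    nlinarith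
  have hI := integrableOn_invertedKernel hα hβα (inv_lt_one_of_one_lt₀ (by linarith : 1 < 1 + ε))
  have hIoc : IntegrableOn (invertedKernel α β) (Ioc 0 (1 - ε)) :=
    hI.mono_set (Ioc_subset_Ioc_right hgap.le)
  have hIoo : IntegrableOn (invertedKernel α β) (Ioo (1 - ε) (1 + ε)⁻¹) :=
    hI.mono_set fun t ht => ⟨by linarith [ht.1], ht.2.le⟩
  have hPoc : IntegrableOn (powerKernel α β) (Ioc 0 (1 - ε)) :=
    integrableOn_powerKernel_Ioc hβ (by linarith)
  have hPci : IntegrableOn (powerKernel α β) (Ici (1 + ε)) :=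
    (integrableOn_Ici_iff_integrableOn_Ioi).2 (integrableOn_powerKernel_Ioi hα hβα (by linarith))
  have hdisj : Disjoint (Ioc 0 (1 - ε)) (Ici (1 + ε)) :=
    disjoint_left.2 fun t h₁ h₂ => by linarith [h₁.2, mem_Ici.1 h₂]
  have hdisj' : Disjoint (Ioc 0 (1 - ε)) (Ioo (1 - ε) (1 + ε)⁻¹) :=
    disjoint_left.2 fun t h₁ h₂ => by linarith [h₁.2, h₂.1]
  rw [setOf_pos_and_le_abs_sub_one (by linarith),
    setIntegral_union hdisj measurableSet_Ici hPoc hPci, integral_Ici_eq_integral_Ioi,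
    integral_powerKernel_Ioi (by linarith), ← Ioc_union_Ioo_eq_Ioo (by linarith) hgap,
    setIntegral_union hdisj' measurableSet_Ioo hIoc hIoo, ← add_assoc,
    ← integral_add hPoc hIoc, ← integral_neg]
  congr 1
  exact setIntegral_congr_fun measurableSet_Ioc fun t ht =>
    powerKernel_add_invertedKernel ht.1 (by linarith [ht.2])

theorem exists_abs_invertedKernel_le :
    ∃ C, 0 ≤ C ∧ ∀ t ∈ Ioo (1 / 2) 1, |invertedKernel α β t| ≤ C * (1 - t) ^ (-α) := by
  obtain ⟨C, hC0, hC⟩ := exists_abs_le_mul_one_sub (a := 1 / 2)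
    (u := fun t => t ^ (α - 1) - t ^ (α - β - 1))
    ((contDiffOn_rpow_const_Icc (by norm_num) _).sub (contDiffOn_rpow_const_Icc (by norm_num) _))
    (by simp)
  refine ⟨C, hC0, fun t ht => ?_⟩
  have h1t : 0 < 1 - t := sub_pos.2 ht.2
  calc |invertedKernel α β t|
      = |t ^ (α - 1) - t ^ (α - β - 1)| / ((1 - t) ^ α * (1 - t)) := by
        rw [invertedKernel, abs_div, abs_of_pos (rpow_pos_of_pos h1t _), rpow_add_one h1t.ne']
    _ ≤ C * (1 - t) / ((1 - t) ^ α * (1 - t)) :=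
        div_le_div_of_nonneg_right (hC t ⟨ht.1.le, ht.2.le⟩) (by positivity)
    _ = C * (1 - t) ^ (-α) := by
        rw [rpow_neg h1t.le]
        field_simp

theorem tendsto_integral_invertedKernel_gap (hα0 : 0 < α) (hα2 : α < 2) :
    Tendsto (fun ε => ∫ t in Ioo (1 - ε) (1 + ε)⁻¹, invertedKernel α β t) (𝓝[>] 0) (𝓝 0) := by
  obtain ⟨C, hC0, hC⟩ := exists_abs_invertedKernel_le (α := α) (β := β)
  have hlim : Tendsto (fun ε : ℝ => C * 2 ^ α * ε ^ (2 - α)) (𝓝[>] 0) (𝓝 0) := by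
    have h := (continuousAt_rpow_const 0 (2 - α) (Or.inr (by linarith))).tendsto.const_mul
      (C * 2 ^ α)
    rw [zero_rpow (by linarith), mul_zero] at h
    exact h.mono_left nhdsWithin_le_nhds
  refine squeeze_zero_norm' ?_ hlim
  filter_upwards [Ioo_mem_nhdsGT (by norm_num : (0 : ℝ) < 1 / 2)] with ε ⟨hε0, hε1⟩
  have hinv : (1 + ε)⁻¹ ≤ 1 - ε / 2 := by
    rw [← one_div, div_le_iff₀ (by linarith)]
    nlinarith
  have hbound : ∀ t ∈ Ioo (1 - ε) (1 + ε)⁻¹, ‖invertedKernel α β t‖ ≤ C * (ε / 2) ^ (-α) := by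
    intro t ht
    have h1t : ε / 2 ≤ 1 - t := by linarith [ht.2]
    have ht' : t ∈ Ioo (1 / 2 : ℝ) 1 := ⟨by linarith [ht.1], by linarith [ht.2]⟩
    calc ‖invertedKernel α β t‖ ≤ C * (1 - t) ^ (-α) := hC t ht'
      _ ≤ C * (ε / 2) ^ (-α) := mul_le_mul_of_nonneg_left
          (rpow_le_rpow_of_nonpos (by positivity) h1t (neg_nonpos.2 hα0.le)) hC0
  have hvol : volume.real (Ioo (1 - ε) (1 + ε)⁻¹) ≤ ε ^ 2 := by
    rw [volume_real_Ioo]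
    refine max_le ?_ (sq_nonneg ε)
    rw [sub_le_iff_le_add, ← one_div, div_le_iff₀ (by linarith)]
    nlinarith
  calc ‖∫ t in Ioo (1 - ε) (1 + ε)⁻¹, invertedKernel α β t‖
      ≤ C * (ε / 2) ^ (-α) * volume.real (Ioo (1 - ε) (1 + ε)⁻¹) :=
        norm_setIntegral_le_of_norm_le_const measure_Ioo_lt_top hbound
    _ ≤ C * (ε / 2) ^ (-α) * ε ^ 2 := by gcongr
    _ = C * 2 ^ α * ε ^ (2 - α) := by
        rw [div_rpow hε0.le zero_le_two, rpow_neg hε0.le, rpow_neg zero_le_two,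
          rpow_sub hε0, rpow_two]
        field_simp

theorem gammaIntegrand_nonpos (hsign : 0 ≤ β * (α - β - 1)) {t : ℝ} (ht0 : 0 < t) (ht1 : t < 1) :
    gammaIntegrand α β t ≤ 0 := by
  refine div_nonpos_of_nonpos_of_nonneg ?_ (rpow_nonneg (by linarith) _)
  rcases lt_trichotomy β 0 with hβ | rfl | hβ
  · have h₁ : 1 ≤ t ^ β := one_le_rpow_of_pos_of_le_one_of_nonpos ht0 ht1.le hβ.le
    have h₂ : 1 ≤ t ^ (α - β - 1) :=
      one_le_rpow_of_pos_of_le_one_of_nonpos ht0 ht1.le (by nlinarith)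
    nlinarith
  · simp
  · have h₁ : t ^ β ≤ 1 := rpow_le_one ht0.le ht1.le hβ.le
    have h₂ : t ^ (α - β - 1) ≤ 1 := rpow_le_one ht0.le ht1.le (by nlinarith)
    nlinarith

end Kernels

theorem stmt_10_general (α β : ℝ) (hα0 : 0 < α) (hα2 : α < 2)
    (hβ : -1 < β) (hβα : β < α) :
    Filter.Tendsto
      (fun ε : ℝ => ∫ z in {z : ℝ | 0 < z ∧ ε ≤ |z - 1|}, (1 - z ^ β) / |1 - z| ^ (α + 1))
      (nhdsWithin 0 (Set.Ioi 0))
      (nhds (-(∫ t in Set.Ioo (0 : ℝ) 1,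
        (t ^ β - 1) * (1 - t ^ (α - β - 1)) / (1 - t) ^ (α + 1)))) ∧
    (0 ≤ β * (α - β - 1) →
      ∫ t in Set.Ioo (0 : ℝ) 1,
        (t ^ β - 1) * (1 - t ^ (α - β - 1)) / (1 - t) ^ (α + 1) ≤ 0) := by
  refine ⟨?_, fun hsign => setIntegral_nonpos measurableSet_Ioo fun t ht =>
    gammaIntegrand_nonpos hsign ht.1 ht.2⟩
  have hlim := ((tendsto_setIntegral_Ioc_sub zero_lt_one
    (integrableOn_gammaIntegrand hα0 hα2 hβ hβα)).neg).add
    (tendsto_integral_invertedKernel_gap (β := β) hα0 hα2)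
  rw [add_zero, integral_Ioc_eq_integral_Ioo] at hlim
  refine hlim.congr' ?_
  filter_upwards [Ioo_mem_nhdsGT zero_lt_one] with ε hε
  exact (integral_powerKernel_truncated hα0 hβ hβα hε.1 hε.2).symm

theorem stmt_10 (α β x : ℝ) (hα0 : 0 < α) (hα2 : α < 2) (hx : 0 < x)
    (hβ : -1 < β) (hβα : β < α) :
    Filter.Tendsto
      (fun ε : ℝ => ∫ z in {z : ℝ | 0 < z ∧ ε ≤ |z - 1|}, (1 - z ^ β) / |1 - z| ^ (α + 1))
      (nhdsWithin 0 (Set.Ioi 0))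
      (nhds (-(∫ t in Set.Ioo (0 : ℝ) 1,
        (t ^ β - 1) * (1 - t ^ (α - β - 1)) / (1 - t) ^ (α + 1)))) ∧
    (0 ≤ β * (α - β - 1) →
      ∫ t in Set.Ioo (0 : ℝ) 1,
        (t ^ β - 1) * (1 - t ^ (α - β - 1)) / (1 - t) ^ (α + 1) ≤ 0) :=
  stmt_10_general α β hα0 hα2 hβ hβα
end

section
/- Let α ∈ (0,2) and set ρ := sin(πα/2)·Γ((α+1)/2)²/Γ(α). If W has density R(1,w) on (0,∞) with E[W^{(α−1)/2}] = ρ, then ρ < 1 for α ∈ (0,1) ∪ (1,2); and, by Jensen's inequality for the concave logarithm, ((α−1)/2)·E[ln W] ≤ ln ρ < 0, so E[ln W] > 0 for α ∈ (0,1) and E[ln W] < 0 for α ∈ (1,2). -/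
theorem stmt_15 {Ω : Type*} [MeasurableSpace Ω] (P : MeasureTheory.Measure Ω)
    [MeasureTheory.IsProbabilityMeasure P]
    (α ρ : ℝ) (hα0 : 0 < α) (hα2 : α < 2) (hα1 : α ≠ 1)
    (hρ : ρ = Real.sin (Real.pi * α / 2) * (Real.Gamma ((α + 1) / 2)) ^ 2 / Real.Gamma α)
    (W : Ω → ℝ) (hWpos : ∀ ω, 0 < W ω)
    (hmom : MeasureTheory.Integrable (fun ω => (W ω) ^ ((α - 1) / 2)) P)
    (hval : ∫ ω, (W ω) ^ ((α - 1) / 2) ∂P = ρ)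
    (hlog : MeasureTheory.Integrable (fun ω => Real.log (W ω)) P) :
    ρ < 1 ∧
    ((α - 1) / 2) * ∫ ω, Real.log (W ω) ∂P ≤ Real.log ρ ∧
    Real.log ρ < 0 ∧
    (α < 1 → 0 < ∫ ω, Real.log (W ω) ∂P) ∧
    (1 < α → ∫ ω, Real.log (W ω) ∂P < 0) := by
  have hπ := Real.pi_pos
  have hΓα : 0 < Real.Gamma α := Real.Gamma_pos_of_pos hα0
  have hm : 0 < (α + 1) / 2 := by linarith
  have hΓm : 0 < Real.Gamma ((α + 1) / 2) := Real.Gamma_pos_of_pos hm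
  -- sin (πα/2) < 1
  have hsin_ne : Real.sin (Real.pi * α / 2) ≠ 1 := by
    intro h
    rcases Real.sin_eq_one_iff.mp h with ⟨k, hk⟩
    have hα' : α = 1 + 4 * (k : ℝ) := by
      have hπ0 : Real.pi ≠ 0 := ne_of_gt hπ
      field_simp at hk
      nlinarith [hk]
    have hk1 : (-1 : ℝ) < (k : ℝ) := by nlinarith
    have hk2 : (k : ℝ) < 1 := by nlinarith
    have : k = 0 := by
      have h1 : (-1 : ℤ) < k := by exact_mod_cast hk1
      have h2 : k < 1 := by exact_mod_cast hk2
      omega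
    rw [this] at hα'
    simp at hα'
    exact hα1 hα'
  have hsin_le : Real.sin (Real.pi * α / 2) ≤ 1 := Real.sin_le_one _
  have hsin_lt : Real.sin (Real.pi * α / 2) < 1 := lt_of_le_of_ne hsin_le hsin_ne
  have hsin_pos : 0 < Real.sin (Real.pi * α / 2) := by
    apply Real.sin_pos_of_pos_of_lt_pi
    · positivity
    · nlinarith
  -- Γ((α+1)/2)^2 ≤ Γ α by log-convexity
  have hΓsq : Real.Gamma ((α + 1) / 2) ^ 2 ≤ Real.Gamma α := by
    have h := Real.Gamma_mul_add_mul_le_rpow_Gamma_mul_rpow_Gamma (s := α) (t := 1)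
      (a := 1 / 2) (b := 1 / 2) hα0 one_pos (by norm_num) (by norm_num) (by norm_num)
    rw [Real.Gamma_one, Real.one_rpow, mul_one, mul_one] at h
    have h' : (α + 1) / 2 = 1 / 2 * α + 1 / 2 := by ring
    rw [← h']  at h
    have h2 : Real.Gamma ((α + 1) / 2) ^ 2 ≤ (Real.Gamma α ^ ((1:ℝ) / 2)) ^ 2 := by
      have := pow_le_pow_left₀ hΓm.le h 2
      exact this
    calc Real.Gamma ((α + 1) / 2) ^ 2 ≤ (Real.Gamma α ^ ((1:ℝ) / 2)) ^ 2 := h2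
      _ = Real.Gamma α := by
          rw [← Real.rpow_natCast (Real.Gamma α ^ ((1:ℝ)/2)) 2, ← Real.rpow_mul hΓα.le]
          norm_num
  have hρ1 : ρ < 1 := by
    rw [hρ, div_lt_one hΓα]
    calc Real.sin (Real.pi * α / 2) * Real.Gamma ((α + 1) / 2) ^ 2
        < 1 * Real.Gamma ((α + 1) / 2) ^ 2 := by
          apply mul_lt_mul_of_pos_right hsin_lt (by positivity)
      _ = Real.Gamma ((α + 1) / 2) ^ 2 := one_mul _
      _ ≤ Real.Gamma α := hΓsq
  have hρpos : 0 < ρ := by rw [hρ]; positivity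
  -- Jensen via convexity of exp
  have hrw : ∀ ω, W ω ^ ((α - 1) / 2) = Real.exp ((α - 1) / 2 * Real.log (W ω)) := by
    intro ω
    rw [Real.rpow_def_of_pos (hWpos ω), mul_comm]
  have hfi : MeasureTheory.Integrable (fun ω => (α - 1) / 2 * Real.log (W ω)) P :=
    hlog.const_mul _
  have hgi : MeasureTheory.Integrable
      (Real.exp ∘ fun ω => (α - 1) / 2 * Real.log (W ω)) P := by
    have : (Real.exp ∘ fun ω => (α - 1) / 2 * Real.log (W ω)) =
        fun ω => W ω ^ ((α - 1) / 2) := by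
      funext ω; simp [Function.comp, hrw ω]
    rw [this]; exact hmom
  have jensen := convexOn_exp.map_integral_le (μ := P)
    Real.continuous_exp.continuousOn isClosed_univ
    (Filter.Eventually.of_forall fun _ => Set.mem_univ _) hfi hgi
  have hint_eq : ∫ ω, Real.exp ((α - 1) / 2 * Real.log (W ω)) ∂P = ρ := by
    rw [← hval]
    congr 1
    funext ω
    exact (hrw ω).symm
  have hexp_le : Real.exp (∫ ω, (α - 1) / 2 * Real.log (W ω) ∂P) ≤ ρ := by
    calc Real.exp (∫ ω, (α - 1) / 2 * Real.log (W ω) ∂P)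
        ≤ ∫ ω, Real.exp ((α - 1) / 2 * Real.log (W ω)) ∂P := jensen
      _ = ρ := hint_eq
  have hJ : (α - 1) / 2 * ∫ ω, Real.log (W ω) ∂P ≤ Real.log ρ := by
    rw [← MeasureTheory.integral_const_mul]
    exact (Real.le_log_iff_exp_le hρpos).mpr hexp_le
  have hlogρ : Real.log ρ < 0 := Real.log_neg hρpos hρ1
  have hprod : (α - 1) / 2 * ∫ ω, Real.log (W ω) ∂P < 0 := lt_of_le_of_lt hJ hlogρ
  refine ⟨hρ1, hJ, hlogρ, ?_, ?_⟩
  · intro hα1'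
    nlinarith [hprod]
  · intro hα1'
    nlinarith [hprod]
end

section
/- For α ∈ (0,2), the map h_{α−1}(x) = |x|^{α−1} on ℝ∖{0} satisfies: for every x > 0, ∫_{−∞}^0 P_D(x,y)·|y|^{α−1} dy = x^{α−1}, where P_D(x,y) = (1/π)·sin(πα/2)·x^{α/2}/(|y|^{α/2}·|x−y|) is the Poisson kernel of the half-line D = (0,∞) for the fractional Laplacian. -/
/-!
Substituting `y = -x z` turns the integral into
`x ^ (α - 1) * sin (π α / 2) / π * ∫₀^∞ z ^ (α / 2 - 1) / (1 + z) dz`, and the substitution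
`t = z / (1 + z)` identifies the last integral with the Beta integral `B(α / 2, 1 - α / 2)`,
which equals `Γ(α / 2) Γ(1 - α / 2) = π / sin (π α / 2)` by Euler's reflection formula.
-/

open MeasureTheory Set Real

theorem integral_Ioo_rpow_mul_one_sub_rpow {u v : ℝ} (hu : 0 < u) (hv : 0 < v) :
    ∫ t in Ioo (0 : ℝ) 1, t ^ (u - 1) * (1 - t) ^ (v - 1) = Gamma u * Gamma v / Gamma (u + v) := by
  have hB := Complex.betaIntegral_eq_Gamma_mul_div u v (by simpa) (by simpa)
  rw [← Complex.ofReal_add, Complex.Gamma_ofReal, Complex.Gamma_ofReal, Complex.Gamma_ofReal,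
    Complex.betaIntegral] at hB
  apply Complex.ofReal_injective
  rw [← integral_Ioc_eq_integral_Ioo, ← intervalIntegral.integral_of_le zero_le_one,
    ← intervalIntegral.integral_ofReal]
  push_cast
  rw [← hB]
  refine intervalIntegral.integral_congr fun t ht => ?_
  rw [uIcc_of_le zero_le_one] at ht
  rw [Complex.ofReal_cpow ht.1, Complex.ofReal_cpow (sub_nonneg.2 ht.2)]
  push_cast
  rfl

theorem image_div_one_add_Ioi : (fun z : ℝ => z / (1 + z)) '' Ioi 0 = Ioo 0 1 := by
  ext t
  simp only [mem_image, mem_Ioi, mem_Ioo]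
  constructor
  · rintro ⟨z, hz, rfl⟩
    exact ⟨by positivity, (div_lt_one (by linarith)).2 (by linarith)⟩
  · rintro ⟨ht0, ht1⟩
    refine ⟨t / (1 - t), div_pos ht0 (by linarith), ?_⟩
    field_simp
    ring

theorem injOn_div_one_add_Ioi : InjOn (fun z : ℝ => z / (1 + z)) (Ioi 0) := by
  intro z hz w hw h
  simp only [mem_Ioi] at hz hw
  field_simp at h
  linarith

theorem hasDerivAt_div_one_add {z : ℝ} (hz : 1 + z ≠ 0) :
    HasDerivAt (fun z : ℝ => z / (1 + z)) ((1 + z) ^ 2)⁻¹ z := by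
  refine ((hasDerivAt_id' z).div ((hasDerivAt_id' z).const_add 1) hz).congr_deriv ?_
  field_simp
  ring

theorem integral_Ioi_rpow_mul_one_add_rpow {u v : ℝ} (hu : 0 < u) (hv : 0 < v) :
    ∫ z in Ioi (0 : ℝ), z ^ (u - 1) * (1 + z) ^ (-(u + v)) = Gamma u * Gamma v / Gamma (u + v) := by
  rw [← integral_Ioo_rpow_mul_one_sub_rpow hu hv, ← image_div_one_add_Ioi,
    integral_image_eq_integral_abs_deriv_smul measurableSet_Ioi
      (fun z hz => (hasDerivAt_div_one_add (by simp at hz; linarith)).hasDerivWithinAt)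
      injOn_div_one_add_Ioi]
  refine setIntegral_congr_fun measurableSet_Ioi fun z (hz : 0 < z) => ?_
  have h1z : 0 < 1 + z := by linarith
  have hsub : 1 - z / (1 + z) = (1 + z)⁻¹ := by field_simp; ring
  rw [smul_eq_mul, hsub, div_rpow hz.le h1z.le, inv_rpow h1z.le, abs_of_pos (by positivity),
    rpow_neg h1z.le]
  have hsplit : (1 + z) ^ (u + v) = (1 + z) ^ 2 * (1 + z) ^ (u - 1) * (1 + z) ^ (v - 1) := by
    rw [← rpow_natCast, ← rpow_add h1z, ← rpow_add h1z]
    norm_num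
    ring_nf
  rw [hsplit]
  field_simp

theorem integral_Ioi_rpow_div_one_add {a : ℝ} (ha0 : 0 < a) (ha1 : a < 1) :
    ∫ z in Ioi (0 : ℝ), z ^ (a - 1) / (1 + z) = π / sin (π * a) := by
  have h := integral_Ioi_rpow_mul_one_add_rpow ha0 (sub_pos.2 ha1)
  rw [add_sub_cancel, Gamma_one, div_one, Gamma_mul_Gamma_one_sub] at h
  simpa [rpow_neg_one, div_eq_mul_inv] using h

theorem integral_Iio_zero_eq_smul_integral_Ioi {E : Type*} [NormedAddCommGroup E]
    [NormedSpace ℝ E] (f : ℝ → E) {x : ℝ} (hx : 0 < x) :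
    ∫ y in Iio 0, f y = x • ∫ z in Ioi 0, f (-(x * z)) := by
  rw [← integral_Iic_eq_integral_Iio, ← neg_zero, ← integral_comp_neg_Ioi, neg_zero,
    integral_comp_mul_left_Ioi (fun t => f (-t)) 0 hx, mul_zero, smul_inv_smul₀ hx.ne']

noncomputable def poissonKernelHalfLine (α x y : ℝ) : ℝ :=
  (1 / π) * sin (π * α / 2) * x ^ (α / 2) / (|y| ^ (α / 2) * |x - y|)

theorem poissonKernelHalfLine_neg_mul (α : ℝ) {x z : ℝ} (hx : 0 < x) (hz : 0 < z) :
    poissonKernelHalfLine α x (-(x * z)) * |-(x * z)| ^ (α - 1) =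
      sin (π * α / 2) / π * x ^ (α - 2) * (z ^ (α / 2 - 1) / (1 + z)) := by
  have hx1 : x ^ (α - 1) = x ^ (α - 2) * x := by
    rw [← rpow_add_one hx.ne']; ring_nf
  have hz1 : z ^ (α - 1) = z ^ (α / 2 - 1) * z ^ (α / 2) := by
    rw [← rpow_add hz]; ring_nf
  have hsum : x - -(x * z) = x * (1 + z) := by ring
  rw [poissonKernelHalfLine, abs_neg, hsum, abs_of_pos (by positivity), abs_of_pos (by positivity),
    mul_rpow hx.le hz.le, mul_rpow hx.le hz.le, hx1, hz1]
  have : 0 < x ^ (α / 2) := by positivity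
  have : 0 < z ^ (α / 2) := by positivity
  field_simp

theorem stmt_18 (α x : ℝ) (hα0 : 0 < α) (hα2 : α < 2) (hx : 0 < x) :
    ∫ y in Set.Iio (0 : ℝ),
      (1 / Real.pi) * Real.sin (Real.pi * α / 2) * x ^ (α / 2) /
        (|y| ^ (α / 2) * |x - y|) * |y| ^ (α - 1) = x ^ (α - 1) := by
  have hsin : sin (π * α / 2) ≠ 0 :=
    (sin_pos_of_pos_of_lt_pi (by positivity) (by nlinarith [pi_pos])).ne'
  change ∫ y in Iio 0, poissonKernelHalfLine α x y * |y| ^ (α - 1) = _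
  rw [integral_Iio_zero_eq_smul_integral_Ioi _ hx,
    setIntegral_congr_fun measurableSet_Ioi fun z hz => poissonKernelHalfLine_neg_mul α hx hz,
    integral_const_mul, integral_Ioi_rpow_div_one_add (by linarith) (by linarith),
    smul_eq_mul, ← mul_div_assoc, show α - 1 = α - 2 + 1 by ring, rpow_add_one hx.ne']
  field_simp
end
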